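/- For every n ≥ 1 and real parameters m_{ij}^{(±)} (i,j = 1,…,n), the (2n)²×(2n)² matrix R̂(θ) = Σ_{ε=±} Σ_{i,j=1}^n e^{m_{ij}^{(ε)} θ} (P_{ij}^{(ε)} + P_{i j̄}^{(ε)}) satisfies the braid equation R̂₁₂(θ) R̂₂₃(θ+θ') R̂₁₂(θ') = R̂₂₃(θ') R̂₁₂(θ+θ') R̂₂₃(θ) for all real θ, θ'. -/

import Mathlib

open Matrix Kronecker

def elemMat (n : ℕ) (a b : Fin (2 * n)) : Matrix (Fin (2 * n)) (Fin (2 * n)) ℝ :=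
  Matrix.single a b 1

def emb (n : ℕ) (i : Fin n) : Fin (2 * n) := ⟨i.val, by omega⟩

def barEmb (n : ℕ) (i : Fin n) : Fin (2 * n) := ⟨2 * n - 1 - i.val, by omega⟩

/-- The projector `P_{ij}^{(ε)}`. -/
noncomputable def Pproj (n : ℕ) (ε : ℝ) (i j : Fin n) :
    Matrix (Fin (2 * n) × Fin (2 * n)) (Fin (2 * n) × Fin (2 * n)) ℝ :=
  (1 / 2 : ℝ) •
    (elemMat n (emb n i) (emb n i) ⊗ₖ elemMat n (emb n j) (emb n j)
      + elemMat n (barEmb n i) (barEmb n i) ⊗ₖ elemMat n (barEmb n j) (barEmb n j)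
      + ε • (elemMat n (emb n i) (barEmb n i) ⊗ₖ elemMat n (emb n j) (barEmb n j)
          + elemMat n (barEmb n i) (emb n i) ⊗ₖ elemMat n (barEmb n j) (emb n j)))

/-- The projector `P_{i j̄}^{(ε)}` (i.e. `j ↦ j̄`). -/
noncomputable def PprojBar (n : ℕ) (ε : ℝ) (i j : Fin n) :
    Matrix (Fin (2 * n) × Fin (2 * n)) (Fin (2 * n) × Fin (2 * n)) ℝ :=
  (1 / 2 : ℝ) •
    (elemMat n (emb n i) (emb n i) ⊗ₖ elemMat n (barEmb n j) (barEmb n j)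
      + elemMat n (barEmb n i) (barEmb n i) ⊗ₖ elemMat n (emb n j) (emb n j)
      + ε • (elemMat n (emb n i) (barEmb n i) ⊗ₖ elemMat n (barEmb n j) (emb n j)
          + elemMat n (barEmb n i) (emb n i) ⊗ₖ elemMat n (emb n j) (barEmb n j)))

/-- `R̂(θ) = Σ_{ε=±} Σ_{i,j} e^{m_{ij}^{(ε)} θ} (P_{ij}^{(ε)} + P_{i j̄}^{(ε)})`. -/
noncomputable def Rhat (n : ℕ) (mp mm : Fin n → Fin n → ℝ) (θ : ℝ) :
    Matrix (Fin (2 * n) × Fin (2 * n)) (Fin (2 * n) × Fin (2 * n)) ℝ :=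
  ∑ i : Fin n, ∑ j : Fin n,
    (Real.exp (mp i j * θ) • (Pproj n 1 i j + PprojBar n 1 i j)
      + Real.exp (mm i j * θ) • (Pproj n (-1) i j + PprojBar n (-1) i j))

/-- `R̂₁₂ = R̂ ⊗ I_{2n}` on `(ℝ^{2n})^{⊗3}`. -/
noncomputable def R12 (n : ℕ) (mp mm : Fin n → Fin n → ℝ) (θ : ℝ) :
    Matrix (Fin (2 * n) × Fin (2 * n) × Fin (2 * n)) (Fin (2 * n) × Fin (2 * n) × Fin (2 * n)) ℝ :=
  Matrix.of fun p q =>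
    Rhat n mp mm θ (p.1, p.2.1) (q.1, q.2.1) * (if p.2.2 = q.2.2 then 1 else 0)

/-- `R̂₂₃ = I_{2n} ⊗ R̂` on `(ℝ^{2n})^{⊗3}`. -/
noncomputable def R23 (n : ℕ) (mp mm : Fin n → Fin n → ℝ) (θ : ℝ) :
    Matrix (Fin (2 * n) × Fin (2 * n) × Fin (2 * n)) (Fin (2 * n) × Fin (2 * n) × Fin (2 * n)) ℝ :=
  Matrix.of fun p q =>
    (if p.1 = q.1 then 1 else 0) * Rhat n mp mm θ p.2 q.2


/-! On the block `V_i ⊗ V_j`, where `V_i = span(e_i, e_ī)`, the matrix `R̂(θ)` is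
`e^{m⁺_{ij} θ} P₊ + e^{m⁻_{ij} θ} P₋` with `P± = (1 ± X ⊗ X)/2`, where `X` swaps `e_a` and `e_ā`.
Since `P±` are complementary idempotents commuting with the block-diagonal weights, `θ ↦ R̂₁₂(θ)`
and `θ ↦ R̂₂₃(θ)` are one-parameter groups. They commute with each other: `X ⊗ X ⊗ 1` and
`1 ⊗ X ⊗ X` commute, and the weights of each factor are invariant under the flips of the other,
because `a` and `ā` lie in the same block. Hence both sides of the braid equation equal
`R̂₁₂(θ + θ') R̂₂₃(θ + θ')`. -/

section TwistMatrix

variable {ι R : Type*} [Fintype ι] [DecidableEq ι] [CommRing R]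

theorem commute_diagonal_permMatrix {τ : Equiv.Perm ι} {u : ι → R} (hu : ∀ p, u (τ p) = u p) :
    Commute (diagonal u) (τ.permMatrix R) := by
  rw [Commute, SemiconjBy, Equiv.Perm.permMatrix, PEquiv.mul_toMatrix_toPEquiv,
    PEquiv.toMatrix_toPEquiv_mul]
  ext p q
  simp only [submatrix_apply, id, diagonal_apply, Equiv.eq_symm_apply]
  rcases eq_or_ne (τ p) q with rfl | h <;> simp [*]

theorem permMatrix_mul_self {τ : Equiv.Perm ι} (hτ : Function.Involutive τ) :
    τ.permMatrix R * τ.permMatrix R = 1 := by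
  rw [← permMatrix_mul, show τ * τ = 1 from Equiv.ext hτ, permMatrix_one]

theorem commute_permMatrix {τ σ : Equiv.Perm ι} (h : Commute τ σ) :
    Commute (τ.permMatrix R) (σ.permMatrix R) := by
  simp only [Commute, SemiconjBy, ← permMatrix_mul, h.eq]

def twistMatrix (τ : Equiv.Perm ι) (c s : ι → R) : Matrix ι ι R :=
  diagonal c + diagonal s * τ.permMatrix R

theorem twistMatrix_apply (τ : Equiv.Perm ι) (c s : ι → R) (p q : ι) :
    twistMatrix τ c s p q = (if p = q then c p else 0) + if τ p = q then s p else 0 := by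
  rw [twistMatrix, Equiv.Perm.permMatrix, PEquiv.mul_toMatrix_toPEquiv]
  simp [diagonal_apply, Equiv.eq_symm_apply]

theorem twistMatrix_mul_twistMatrix {τ : Equiv.Perm ι} (hτ : Function.Involutive τ)
    (c s c' s' : ι → R) (hc' : ∀ p, c' (τ p) = c' p) (hs' : ∀ p, s' (τ p) = s' p) :
    twistMatrix τ c s * twistMatrix τ c' s'
      = twistMatrix τ (fun p => c p * c' p + s p * s' p) (fun p => c p * s' p + s p * c' p) := by
  unfold twistMatrix
  set T := τ.permMatrix R
  have hTc' : T * diagonal c' = diagonal c' * T := (commute_diagonal_permMatrix hc').eq.symm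
  have hTs'T : T * (diagonal s' * T) = diagonal s' := by
    rw [← mul_assoc, ← (commute_diagonal_permMatrix hs').eq, mul_assoc, permMatrix_mul_self hτ,
      mul_one]
  simp only [add_mul, mul_add, mul_assoc, hTc', hTs'T]
  simp only [← mul_assoc, diagonal_mul_diagonal, ← diagonal_add, add_mul]
  abel

theorem commute_twistMatrix {τ σ : Equiv.Perm ι} (hτσ : Commute τ σ) {c s c' s' : ι → R}
    (hc : ∀ p, c (σ p) = c p) (hs : ∀ p, s (σ p) = s p)
    (hc' : ∀ p, c' (τ p) = c' p) (hs' : ∀ p, s' (τ p) = s' p) :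
    Commute (twistMatrix τ c s) (twistMatrix σ c' s') := by
  have hD := commute_diagonal (α := R) (n := ι)
  have hT := commute_permMatrix (R := R) hτσ
  have hcσ := commute_diagonal_permMatrix (R := R) hc
  have hsσ := commute_diagonal_permMatrix (R := R) hs
  have hc'τ := (commute_diagonal_permMatrix (R := R) hc').symm
  have hs'τ := (commute_diagonal_permMatrix (R := R) hs').symm
  unfold twistMatrix
  apply_rules [Commute.add_left, Commute.add_right, Commute.mul_left, Commute.mul_right]

end TwistMatrix

section ExpTwist

open Real

variable {ι : Type*} [Fintype ι] [DecidableEq ι]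

/-- `e^{aθ} P₊ + e^{bθ} P₋`, where `P± = (1 ± T)/2` are the eigenprojections of the permutation
matrix `T` of an involution `τ`. -/
noncomputable def expTwist (τ : Equiv.Perm ι) (a b : ι → ℝ) (θ : ℝ) : Matrix ι ι ℝ :=
  twistMatrix τ (fun p => (exp (a p * θ) + exp (b p * θ)) / 2)
    (fun p => (exp (a p * θ) - exp (b p * θ)) / 2)

theorem expTwist_mul_expTwist {τ : Equiv.Perm ι} (hτ : Function.Involutive τ) {a b : ι → ℝ}
    (ha : ∀ p, a (τ p) = a p) (hb : ∀ p, b (τ p) = b p) (θ θ' : ℝ) :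
    expTwist τ a b θ * expTwist τ a b θ' = expTwist τ a b (θ + θ') := by
  rw [expTwist, expTwist, twistMatrix_mul_twistMatrix hτ _ _ _ _ (by simp [ha, hb])
    (by simp [ha, hb]), expTwist]
  congr 1 <;> funext p <;> simp only [mul_add, exp_add] <;> ring

theorem commute_expTwist {τ σ : Equiv.Perm ι} (hτσ : Commute τ σ) {a b a' b' : ι → ℝ}
    (ha : ∀ p, a (σ p) = a p) (hb : ∀ p, b (σ p) = b p)
    (ha' : ∀ p, a' (τ p) = a' p) (hb' : ∀ p, b' (τ p) = b' p) (θ θ' : ℝ) :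
    Commute (expTwist τ a b θ) (expTwist σ a' b' θ') :=
  commute_twistMatrix hτσ (by simp [ha, hb]) (by simp [ha, hb]) (by simp [ha', hb'])
    (by simp [ha', hb'])

end ExpTwist

section Projectors

variable {n : ℕ}

def pairIndex (n : ℕ) (a : Fin (2 * n)) : Fin n :=
  if h : (a : ℕ) < n then ⟨a, h⟩ else ⟨a.rev, by rw [Fin.val_rev]; omega⟩

theorem rev_emb (i : Fin n) : (emb n i).rev = barEmb n i := by
  ext; simp only [emb, barEmb, Fin.val_rev]; omega

theorem rev_barEmb (i : Fin n) : (barEmb n i).rev = emb n i := by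
  rw [← rev_emb, Fin.rev_rev]

theorem emb_ne_barEmb (i j : Fin n) : emb n i ≠ barEmb n j := by
  simp only [ne_eq, Fin.ext_iff, emb, barEmb]; omega

theorem emb_injective : Function.Injective (emb n) := fun i j h => by
  simpa [emb, Fin.ext_iff] using h

theorem barEmb_injective : Function.Injective (barEmb n) := fun i j h => by
  simp only [barEmb, Fin.ext_iff] at h; ext; omega

@[simp] theorem pairIndex_emb (i : Fin n) : pairIndex n (emb n i) = i := by
  simp [pairIndex, emb]

@[simp] theorem pairIndex_rev (a : Fin (2 * n)) : pairIndex n a.rev = pairIndex n a := by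
  have := Fin.val_rev a
  simp only [pairIndex, Fin.rev_rev]
  split_ifs <;> ext <;> simp only [Fin.val_rev] <;> omega

@[simp] theorem pairIndex_barEmb (i : Fin n) : pairIndex n (barEmb n i) = i := by
  rw [← rev_emb, pairIndex_rev, pairIndex_emb]

theorem exists_eq_emb_or_eq_barEmb (a : Fin (2 * n)) : ∃ i, a = emb n i ∨ a = barEmb n i := by
  refine ⟨pairIndex n a, ?_⟩
  by_cases h : (a : ℕ) < n
  · left; ext; simp [pairIndex, emb, h]
  · right; ext; simp only [pairIndex, barEmb, h, dite_false, Fin.val_rev]; omega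

theorem Pproj_add_PprojBar_apply (ε : ℝ) (i j : Fin n) (a b c d : Fin (2 * n)) :
    Pproj n ε i j (a, b) (c, d) + PprojBar n ε i j (a, b) (c, d)
      = if (i, j) = (pairIndex n a, pairIndex n b) then
          ((if (a, b) = (c, d) then 1 else 0) + ε * if (a.rev, b.rev) = (c, d) then 1 else 0) / 2
        else 0 := by
  obtain ⟨i', rfl | rfl⟩ := exists_eq_emb_or_eq_barEmb a <;>
  obtain ⟨j', rfl | rfl⟩ := exists_eq_emb_or_eq_barEmb b <;>
  rcases eq_or_ne i i' with rfl | hi <;> rcases eq_or_ne j j' with rfl | hj <;>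
  simp [Pproj, PprojBar, elemMat, single_apply, rev_emb, rev_barEmb, emb_ne_barEmb,
    (emb_ne_barEmb _ _).symm, emb_injective.eq_iff, barEmb_injective.eq_iff, ite_and, *] <;>
  split_ifs <;> ring

end Projectors

section Braid

variable {n : ℕ} (mp mm : Fin n → Fin n → ℝ)

theorem Rhat_eq_expTwist (θ : ℝ) :
    Rhat n mp mm θ = expTwist (Fin.revPerm.prodCongr Fin.revPerm)
      (fun p => mp (pairIndex n p.1) (pairIndex n p.2))
      (fun p => mm (pairIndex n p.1) (pairIndex n p.2)) θ := by
  ext ⟨a, b⟩ ⟨c, d⟩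
  simp only [Rhat, Matrix.sum_apply, Matrix.add_apply, Matrix.smul_apply, smul_eq_mul,
    Pproj_add_PprojBar_apply, mul_ite, mul_zero, ite_add_ite, add_zero]
  rw [← Fintype.sum_prod_type', Fintype.sum_ite_eq']
  simp only [expTwist, twistMatrix_apply, Equiv.prodCongr_apply, Prod.map, Fin.revPerm_apply]
  split_ifs <;> ring

def rev12 (n : ℕ) : Equiv.Perm (Fin (2 * n) × Fin (2 * n) × Fin (2 * n)) :=
  Fin.revPerm.prodCongr (Fin.revPerm.prodCongr (Equiv.refl _))

def rev23 (n : ℕ) : Equiv.Perm (Fin (2 * n) × Fin (2 * n) × Fin (2 * n)) :=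
  (Equiv.refl _).prodCongr (Fin.revPerm.prodCongr Fin.revPerm)

theorem R12_eq_expTwist (θ : ℝ) :
    R12 n mp mm θ = expTwist (rev12 n)
      (fun p => mp (pairIndex n p.1) (pairIndex n p.2.1))
      (fun p => mm (pairIndex n p.1) (pairIndex n p.2.1)) θ := by
  ext ⟨a, b, c⟩ ⟨x, y, z⟩
  simp only [R12, of_apply, Rhat_eq_expTwist, expTwist, twistMatrix_apply, rev12,
    Equiv.prodCongr_apply, Prod.map, Fin.revPerm_apply, Equiv.refl_apply, Prod.mk.injEq]
  split_ifs <;> simp_all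

theorem R23_eq_expTwist (θ : ℝ) :
    R23 n mp mm θ = expTwist (rev23 n)
      (fun p => mp (pairIndex n p.2.1) (pairIndex n p.2.2))
      (fun p => mm (pairIndex n p.2.1) (pairIndex n p.2.2)) θ := by
  ext ⟨a, b, c⟩ ⟨x, y, z⟩
  simp only [R23, of_apply, Rhat_eq_expTwist, expTwist, twistMatrix_apply, rev23,
    Equiv.prodCongr_apply, Prod.map, Fin.revPerm_apply, Equiv.refl_apply, Prod.mk.injEq]
  split_ifs <;> simp_all

theorem rev12_involutive : Function.Involutive (rev12 n) := fun _ => by simp [rev12, Prod.map]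

theorem rev23_involutive : Function.Involutive (rev23 n) := fun _ => by simp [rev23, Prod.map]

theorem commute_rev12_rev23 : Commute (rev12 n) (rev23 n) := by
  ext p <;> simp [rev12, rev23]

theorem R12_mul_R12 (θ θ' : ℝ) : R12 n mp mm θ * R12 n mp mm θ' = R12 n mp mm (θ + θ') := by
  simp only [R12_eq_expTwist]
  exact expTwist_mul_expTwist rev12_involutive (by simp [rev12]) (by simp [rev12]) θ θ'

theorem R23_mul_R23 (θ θ' : ℝ) : R23 n mp mm θ * R23 n mp mm θ' = R23 n mp mm (θ + θ') := by
  simp only [R23_eq_expTwist]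
  exact expTwist_mul_expTwist rev23_involutive (by simp [rev23]) (by simp [rev23]) θ θ'

theorem commute_R12_R23 (θ θ' : ℝ) : Commute (R12 n mp mm θ) (R23 n mp mm θ') := by
  rw [R12_eq_expTwist, R23_eq_expTwist]
  exact commute_expTwist commute_rev12_rev23 (by simp [rev23]) (by simp [rev23])
    (by simp [rev12]) (by simp [rev12]) θ θ'

end Braid

theorem braid_equation_multiparameter_general (n : ℕ)
    (mp mm : Fin n → Fin n → ℝ) (θ θ' : ℝ) :
    R12 n mp mm θ * R23 n mp mm (θ + θ') * R12 n mp mm θ'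
      = R23 n mp mm θ' * R12 n mp mm (θ + θ') * R23 n mp mm θ := by
  calc R12 n mp mm θ * R23 n mp mm (θ + θ') * R12 n mp mm θ'
      = R12 n mp mm θ * R12 n mp mm θ' * R23 n mp mm (θ + θ') := by
        rw [mul_assoc, (commute_R12_R23 mp mm θ' (θ + θ')).symm.eq, mul_assoc]
    _ = R12 n mp mm (θ + θ') * (R23 n mp mm θ' * R23 n mp mm θ) := by
        rw [R12_mul_R12, R23_mul_R23, add_comm θ']
    _ = R23 n mp mm θ' * R12 n mp mm (θ + θ') * R23 n mp mm θ := by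
        rw [← mul_assoc, (commute_R12_R23 mp mm (θ + θ') θ').eq]

theorem braid_equation_multiparameter (n : ℕ) (hn : 1 ≤ n)
    (mp mm : Fin n → Fin n → ℝ) (θ θ' : ℝ) :
    R12 n mp mm θ * R23 n mp mm (θ + θ') * R12 n mp mm θ'
      = R23 n mp mm θ' * R12 n mp mm (θ + θ') * R23 n mp mm θ :=
  braid_equation_multiparameter_general n mp mm θ θ'
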